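/- The par of player games preserves counter-strategy existence: for player games P and P', the game P ⅋ P' has a counter-strategy if and only if both P and P' have counter-strategies. Equivalently, P ⅋ P' has a strategy iff P has a strategy or P' has a strategy. -/

import Mathlib

/-- Rose trees: the unlabeled shape of a game tree. -/
inductive RTree : Type where
  | node : List RTree → RTree

mutual
/-- An opponent game: a finite list of player games (its children). -/
inductive OGame : Type where
  | mk : List PGame → OGame
/-- A player game: a finite list of opponent games (its children). -/
inductive PGame : Type where
  | mk : List OGame → PGame
end

mutual
/-- The dual of an opponent game. -/
def OGame.dual : OGame → PGame
  | .mk ps => .mk (ps.attach.map fun ⟨p, _⟩ => p.dual)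
/-- The dual of a player game. -/
def PGame.dual : PGame → OGame
  | .mk os => .mk (os.attach.map fun ⟨o, _⟩ => o.dual)
end

mutual
/-- Strategy existence in an opponent game: a conjunction over children. -/
def OGame.strat : OGame → Bool
  | .mk ps => ps.attach.all fun ⟨p, _⟩ => p.strat
/-- Strategy existence in a player game: a disjunction over children. -/
def PGame.strat : PGame → Bool
  | .mk os => os.attach.any fun ⟨o, _⟩ => o.strat
end

mutual
/-- Tensor of opponent games: `O ⊗ O' = (P_i ⊗ˡ O', O ⊗ʳ P'_k | …)`. -/
def otimes : OGame → OGame → OGame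
  | .mk ps, .mk qs => .mk ((ps.attach.map fun ⟨p, _⟩ => oxl p (.mk qs)) ++
      (qs.attach.map fun ⟨q, _⟩ => oxr (.mk ps) q))
  termination_by o o' => sizeOf o + sizeOf o'
  decreasing_by
  · have := List.sizeOf_lt_of_mem ‹p ∈ ps›; simp_all; omega
  · have := List.sizeOf_lt_of_mem ‹q ∈ qs›; simp_all; omega
/-- Mixed tensor `O ⊗ʳ P = {O ⊗ O_j | j ∈ J}`. -/
def oxr : OGame → PGame → PGame
  | o, .mk os => .mk (os.attach.map fun ⟨oj, _⟩ => otimes o oj)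
  termination_by o p => sizeOf o + sizeOf p
  decreasing_by
  · have := List.sizeOf_lt_of_mem ‹oj ∈ os›; simp_all; omega
/-- Mixed tensor `P ⊗ˡ O = {O_j ⊗ O | j ∈ J}`. -/
def oxl : PGame → OGame → PGame
  | .mk os, o => .mk (os.attach.map fun ⟨oj, _⟩ => otimes oj o)
  termination_by p o => sizeOf p + sizeOf o
  decreasing_by
  · have := List.sizeOf_lt_of_mem ‹oj ∈ os›; simp_all; omega
end

mutual
/-- Par of player games: `P ⅋ P' = {O_j ⅋ˡ P', P ⅋ʳ O'_k | …}`. -/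
def parr : PGame → PGame → PGame
  | .mk os, .mk qs => .mk ((os.attach.map fun ⟨o, _⟩ => parrOP o (.mk qs)) ++
      (qs.attach.map fun ⟨q, _⟩ => parrPO (.mk os) q))
  termination_by p p' => sizeOf p + sizeOf p'
  decreasing_by
  · have := List.sizeOf_lt_of_mem ‹o ∈ os›; simp_all; omega
  · have := List.sizeOf_lt_of_mem ‹q ∈ qs›; simp_all; omega
/-- Mixed par `P ⅋ʳ O = (P ⅋ P_i | i ∈ I)`. -/
def parrPO : PGame → OGame → OGame
  | p, .mk ps => .mk (ps.attach.map fun ⟨pi, _⟩ => parr p pi)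
  termination_by p o => sizeOf p + sizeOf o
  decreasing_by
  · have := List.sizeOf_lt_of_mem ‹pi ∈ ps›; simp_all; omega
/-- Mixed par `O ⅋ˡ P = (P_i ⅋ P | i ∈ I)`. -/
def parrOP : OGame → PGame → OGame
  | .mk ps, p => .mk (ps.attach.map fun ⟨pi, _⟩ => parr pi p)
  termination_by o p => sizeOf o + sizeOf p
  decreasing_by
  · have := List.sizeOf_lt_of_mem ‹pi ∈ ps›; simp_all; omega
end

mutual
/-- The exponential `!O`: `!() = ()` and `!O = ⊗_{i∈I} (b_i : !'P_i)` for `I ≠ ∅`. -/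
def bang : OGame → OGame
  | .mk [] => .mk []
  | .mk (p :: ps) =>
      (ps.attach.map fun ⟨q, _⟩ => OGame.mk [bang' q]).foldl otimes (OGame.mk [bang' p])
/-- The auxiliary exponential `!'{a_j : O_j} = {a_j : !O_j}`. -/
def bang' : PGame → PGame
  | .mk os => .mk (os.attach.map fun ⟨o, _⟩ => bang o)
end

mutual
/-- Underlying unlabeled tree of an opponent game. -/
def OGame.toTree : OGame → RTree
  | .mk ps => .node (ps.attach.map fun ⟨p, _⟩ => p.toTree)
/-- Underlying unlabeled tree of a player game. -/
def PGame.toTree : PGame → RTree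
  | .mk os => .node (os.attach.map fun ⟨o, _⟩ => o.toTree)
end

/-- Number of nodes (including the root). -/
def RTree.nodes : RTree → ℕ
  | .node cs => 1 + (cs.attach.map fun ⟨c, _⟩ => c.nodes).sum

/-- Number of parent-child edges. -/
def RTree.edges : RTree → ℕ
  | .node cs => cs.length + (cs.attach.map fun ⟨c, _⟩ => c.edges).sum

/-- Number of leaves. -/
def RTree.leaves : RTree → ℕ
  | .node [] => 1
  | .node cs => (cs.attach.map fun ⟨c, _⟩ => c.leaves).sum

/-- Uniform size: `u[leaf] = 0`, `u[node with n children] = (n-1) + Σ u[child]`. -/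
def RTree.usize : RTree → ℕ
  | .node [] => 0
  | .node cs => (cs.length - 1) + (cs.attach.map fun ⟨c, _⟩ => c.usize).sum

/-- Depth: leaves have depth 0. -/
def RTree.depth : RTree → ℕ
  | .node cs => (cs.attach.map fun ⟨c, _⟩ => c.depth + 1).foldr max 0

/-- `profile t k` is the number of nodes of `t` at depth `k`. -/
def RTree.profile : RTree → ℕ → ℕ
  | _, 0 => 1
  | .node cs, k + 1 => (cs.attach.map fun ⟨c, _⟩ => c.profile k).sum

mutual
/-- Number of player nodes of an opponent game. -/
def OGame.pnodes : OGame → ℕ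
  | .mk ps => (ps.attach.map fun ⟨p, _⟩ => p.pnodes).sum
/-- Number of player nodes of a player game (the root counts). -/
def PGame.pnodes : PGame → ℕ
  | .mk os => 1 + (os.attach.map fun ⟨o, _⟩ => o.pnodes).sum
end

mutual
/-- Number of edges leaving opponent nodes, for an opponent game. -/
def OGame.eo : OGame → ℕ
  | .mk ps => ps.length + (ps.attach.map fun ⟨p, _⟩ => p.eo).sum
/-- Number of edges leaving opponent nodes, for a player game. -/
def PGame.eo : PGame → ℕ
  | .mk os => (os.attach.map fun ⟨o, _⟩ => o.eo).sum
end

mutual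
/-- Number of edges leaving player nodes, for an opponent game. -/
def OGame.ep : OGame → ℕ
  | .mk ps => (ps.attach.map fun ⟨p, _⟩ => p.ep).sum
/-- Number of edges leaving player nodes, for a player game. -/
def PGame.ep : PGame → ℕ
  | .mk os => os.length + (os.attach.map fun ⟨o, _⟩ => o.ep).sum
end

/-- `γ(i,j) = 1` if `i` or `j` is zero or even, else `0`. -/
def gammaCoef (i j : ℕ) : ℕ :=
  if i = 0 ∨ j = 0 ∨ i % 2 = 0 ∨ j % 2 = 0 then 1 else 0

mutual
/-- The single-branch player chain `L_n`. -/
def Lp : ℕ → PGame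
  | 0 => .mk []
  | n + 1 => .mk [Lo n]
/-- The single-branch opponent chain `L'_n`. -/
def Lo : ℕ → OGame
  | 0 => .mk []
  | n + 1 => .mk [Lp n]
end

/-!
Strategy existence evaluates a game tree as an and/or formula, and duality swaps the
connectives, so by de Morgan a game has a counter-strategy iff it has no strategy. It therefore
suffices to show that `P ⅋ P'` has a strategy iff `P` or `P'` has one, which follows by mutual
induction together with the corresponding facts for the mixed pars `O ⅋ˡ P` and `P ⅋ʳ O`
(whose strategies exist iff `O` or `P` has one).
-/

theorem List.any_congr_of_mem {α : Type*} {l : List α} {p q : α → Bool}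
    (h : ∀ a ∈ l, p a = q a) : l.any p = l.any q := by
  induction l <;> simp_all

theorem List.all_congr_of_mem {α : Type*} {l : List α} {p q : α → Bool}
    (h : ∀ a ∈ l, p a = q a) : l.all p = l.all q := by
  induction l <;> simp_all

theorem OGame.strat_mk (ps : List PGame) : (OGame.mk ps).strat = ps.all PGame.strat := by
  simp [OGame.strat]

theorem PGame.strat_mk (os : List OGame) : (PGame.mk os).strat = os.any OGame.strat := by
  simp [PGame.strat]

theorem OGame.dual_mk (ps : List PGame) : (OGame.mk ps).dual = .mk (ps.map PGame.dual) := by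
  simp [OGame.dual]

theorem PGame.dual_mk (os : List OGame) : (PGame.mk os).dual = .mk (os.map OGame.dual) := by
  simp [PGame.dual]

theorem parr_mk (os qs : List OGame) :
    parr (.mk os) (.mk qs) =
      .mk (os.map (parrOP · (.mk qs)) ++ qs.map (parrPO (.mk os) ·)) := by
  simp [parr]

theorem parrPO_mk (p : PGame) (ps : List PGame) :
    parrPO p (.mk ps) = .mk (ps.map (parr p ·)) := by
  simp [parrPO]

theorem parrOP_mk (ps : List PGame) (p : PGame) :
    parrOP (.mk ps) p = .mk (ps.map (parr · p)) := by
  simp [parrOP]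

mutual
theorem OGame.strat_dual : ∀ o : OGame, o.dual.strat = !o.strat
  | .mk ps => by
    rw [OGame.dual_mk, PGame.strat_mk, OGame.strat_mk, List.not_all_eq_any_not, List.any_map]
    exact List.any_congr_of_mem fun p _ => PGame.strat_dual p
  termination_by o => sizeOf o
  decreasing_by have := List.sizeOf_lt_of_mem ‹p ∈ ps›; simp_all; omega

theorem PGame.strat_dual : ∀ p : PGame, p.dual.strat = !p.strat
  | .mk os => by
    rw [PGame.dual_mk, OGame.strat_mk, PGame.strat_mk, List.not_any_eq_all_not, List.all_map]
    exact List.all_congr_of_mem fun o _ => OGame.strat_dual o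
  termination_by p => sizeOf p
  decreasing_by have := List.sizeOf_lt_of_mem ‹o ∈ os›; simp_all; omega
end

/-- `(l.any fun a => f a || c) = (l.any f || c)` fails for `l = []`; the two lists together
make up for it. -/
theorem List.any_or_const_or_any_const_or {α β : Type*} (l : List α) (l' : List β)
    (f : α → Bool) (g : β → Bool) :
    ((l.any fun a => f a || l'.any g) || l'.any fun b => l.any f || g b) =
      (l.any f || l'.any g) := by
  rw [Bool.eq_iff_iff]
  simp only [Bool.or_eq_true, List.any_eq_true]
  grind

mutual
theorem parr_strat : ∀ p p' : PGame, (parr p p').strat = (p.strat || p'.strat)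
  | .mk os, .mk qs => by
    have hos : ∀ o ∈ os, (parrOP o (.mk qs)).strat = (o.strat || (PGame.mk qs).strat) :=
      fun o _ => parrOP_strat o _
    have hqs : ∀ q ∈ qs, (parrPO (.mk os) q).strat = ((PGame.mk os).strat || q.strat) :=
      fun q _ => parrPO_strat _ q
    rw [parr_mk, PGame.strat_mk, List.any_append, List.any_map, List.any_map]
    simp only [Function.comp_def]
    rw [List.any_congr_of_mem hos, List.any_congr_of_mem hqs, PGame.strat_mk, PGame.strat_mk]
    exact List.any_or_const_or_any_const_or os qs OGame.strat OGame.strat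
  termination_by p p' => sizeOf p + sizeOf p'
  decreasing_by
  · have := List.sizeOf_lt_of_mem ‹o ∈ os›; simp_all; omega
  · have := List.sizeOf_lt_of_mem ‹q ∈ qs›; simp_all; omega

theorem parrOP_strat : ∀ (o : OGame) (p : PGame), (parrOP o p).strat = (o.strat || p.strat)
  | .mk ps, p => by
    rw [parrOP_mk, OGame.strat_mk, OGame.strat_mk, List.all_map, List.or_all_distrib_right]
    exact List.all_congr_of_mem fun pi _ => parr_strat pi p
  termination_by o p => sizeOf o + sizeOf p
  decreasing_by have := List.sizeOf_lt_of_mem ‹pi ∈ ps›; simp_all; omega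

theorem parrPO_strat : ∀ (p : PGame) (o : OGame), (parrPO p o).strat = (p.strat || o.strat)
  | p, .mk ps => by
    rw [parrPO_mk, OGame.strat_mk, OGame.strat_mk, List.all_map, List.or_all_distrib_left]
    exact List.all_congr_of_mem fun pi _ => parr_strat p pi
  termination_by p o => sizeOf p + sizeOf o
  decreasing_by have := List.sizeOf_lt_of_mem ‹pi ∈ ps›; simp_all; omega
end

/-- P ⅋ P' has a counter-strategy iff both P and P' do;
equivalently, P ⅋ P' has a strategy iff P or P' has one. -/
theorem parr_counterstrat (P P' : PGame) :
    ((parr P P').dual.strat = true ↔ (P.dual.strat = true ∧ P'.dual.strat = true)) ∧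
    ((parr P P').strat = true ↔ (P.strat = true ∨ P'.strat = true)) := by
  simp only [PGame.strat_dual, parr_strat, Bool.not_or, Bool.and_eq_true, Bool.or_eq_true,
    and_self]
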